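/- arXiv:1408.3800 — 2 statements merged into one kernel-verified Lean document; each statement's English description precedes it below -/
import Mathlib

section
/- (Less noisy lemma with side information) Suppose the channel from X to Y is less noisy than the channel from X to Z given side information S, meaning I(U;Y|S=s) ≥ I(U;Z|S=s) for every s and every U with U → (X,S) → (Y,Z). Let the channel be memoryless and let M be any random variable such that M → (Xⁿ, Sⁿ) → (Yⁿ, Zⁿ) is a Markov chain. Then for every 1 ≤ i ≤ n: I(Y^{i-1}; Y_i | M, Sⁿ) ≥ I(Z^{i-1}; Y_i | M, Sⁿ) and I(Y^{i-1}; Z_i | M, Sⁿ) ≥ I(Z^{i-1}; Z_i | M, Sⁿ). -/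
open scoped Classical
open Finset

noncomputable section

/-- Probability that a discrete random variable `X` takes the value `x`,
under the pmf `p` on a finite sample space. -/
noncomputable def dpr {Ω 𝒳 : Type*} [Fintype Ω] (p : Ω → ℝ) (X : Ω → 𝒳) (x : 𝒳) : ℝ :=
  ∑ ω, if X ω = x then p ω else 0

/-- Shannon entropy (base 2) of a discrete random variable. -/
noncomputable def dH {Ω 𝒳 : Type*} [Fintype Ω] [Fintype 𝒳] (p : Ω → ℝ) (X : Ω → 𝒳) : ℝ :=
  - ∑ x, dpr p X x * Real.logb 2 (dpr p X x)

/-- Mutual information I(X;Y). -/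
noncomputable def dI {Ω 𝒳 𝒴 : Type*} [Fintype Ω] [Fintype 𝒳] [Fintype 𝒴]
    (p : Ω → ℝ) (X : Ω → 𝒳) (Y : Ω → 𝒴) : ℝ :=
  dH p X + dH p Y - dH p (fun ω => (X ω, Y ω))

/-- Conditional mutual information I(X;Y∣Z). -/
noncomputable def dCI {Ω 𝒳 𝒴 𝒵 : Type*} [Fintype Ω] [Fintype 𝒳] [Fintype 𝒴] [Fintype 𝒵]
    (p : Ω → ℝ) (X : Ω → 𝒳) (Y : Ω → 𝒴) (Z : Ω → 𝒵) : ℝ :=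
  dH p (fun ω => (X ω, Z ω)) + dH p (fun ω => (Y ω, Z ω)) - dH p Z
    - dH p (fun ω => (X ω, Y ω, Z ω))

/-- Conditional entropy H(X∣Y). -/
noncomputable def dCH {Ω 𝒳 𝒴 : Type*} [Fintype Ω] [Fintype 𝒳] [Fintype 𝒴]
    (p : Ω → ℝ) (X : Ω → 𝒳) (Y : Ω → 𝒴) : ℝ :=
  dH p (fun ω => (X ω, Y ω)) - dH p Y

/-- `p` is a probability mass function. -/
def IsPMF {Ω : Type*} [Fintype Ω] (p : Ω → ℝ) : Prop := (∀ ω, 0 ≤ p ω) ∧ ∑ ω, p ω = 1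

/-- The Markov chain X → Y → Z: X and Z are conditionally independent given Y. -/
def MarkovChain {Ω 𝒳 𝒴 𝒵 : Type*} [Fintype Ω] (p : Ω → ℝ)
    (X : Ω → 𝒳) (Y : Ω → 𝒴) (Z : Ω → 𝒵) : Prop :=
  ∀ x y z, dpr p (fun ω => (X ω, Y ω, Z ω)) (x, y, z) * dpr p Y y =
    dpr p (fun ω => (X ω, Y ω)) (x, y) * dpr p (fun ω => (Z ω, Y ω)) (z, y)

/-- Independence of two discrete random variables. -/
def dIndep {Ω 𝒳 𝒴 : Type*} [Fintype Ω] (p : Ω → ℝ) (X : Ω → 𝒳) (Y : Ω → 𝒴) : Prop :=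
  ∀ x y, dpr p (fun ω => (X ω, Y ω)) (x, y) = dpr p X x * dpr p Y y

end

/-!
Swap the past outputs `Z₁, …, Z_{i-1}` for `Y₁, …, Y_{i-1}` one letter at a time. Passing from
the hybrid `(Y_{<k}, Z_k, Z_{>k})` to `(Y_{<k}, Y_k, Z_{>k})` changes `I(hybrid; W | M, Sⁿ)` by
`I(Y_k; W | D) - I(Z_k; W | D)` (chain rule), where `D` consists of `M`, `Sⁿ` and the other
letters of the hybrid. As `W ∈ {Y_i, Z_i}` with `i > k`, memorylessness says that given
`(W, X_k, D)` the pair `(Y_k, Z_k)` has law `Q(· | X_k, S_k)`, and `S_k` is read off `D`. So for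
every value `d` of `D` the less noisy hypothesis, with auxiliary `U = W` and the law of `(W, X_k)`
given `D = d`, makes the increment nonnegative; telescoping gives the claim.
-/

open Function

section Distribution

variable {Ω α β γ ρ : Type*} [Fintype Ω] {p : Ω → ℝ}

theorem dpr_congr {X : Ω → α} {Y : Ω → β} {x : α} {y : β} (h : ∀ ω, X ω = x ↔ Y ω = y) :
    dpr p X x = dpr p Y y := by
  simp only [dpr, h]

theorem dpr_nonneg (hp : ∀ ω, 0 ≤ p ω) (X : Ω → α) (x : α) : 0 ≤ dpr p X x :=
  sum_nonneg fun ω _ => by split_ifs <;> simp [hp ω]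

theorem sum_dpr [Fintype α] (X : Ω → α) : ∑ x, dpr p X x = ∑ ω, p ω := by
  simp only [dpr]
  rw [sum_comm]
  simp

theorem isPMF_dpr (hp : IsPMF p) [Fintype α] (X : Ω → α) : IsPMF (dpr p X) :=
  ⟨dpr_nonneg hp.1 X, (sum_dpr X).trans hp.2⟩

theorem dpr_dpr [Fintype α] (X : Ω → α) (g : α → β) (b : β) :
    dpr (dpr p X) g b = dpr p (fun ω => g (X ω)) b := by
  simp only [dpr, ite_sum_zero]
  rw [sum_comm]
  refine sum_congr rfl fun ω _ => ?_
  rw [Fintype.sum_eq_single (X ω) fun a ha => by simp [Ne.symm ha]]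
  simp

theorem sum_dpr_pair [Fintype γ] (X : Ω → α) (Y : Ω → γ) (x : α) :
    ∑ y, dpr p (fun ω => (X ω, Y ω)) (x, y) = dpr p X x := by
  simp only [dpr]
  rw [sum_comm]
  simp [Prod.ext_iff, ite_and]

theorem dpr_pair_le (hp : ∀ ω, 0 ≤ p ω) (X : Ω → α) (Y : Ω → β) (x : α) (y : β) :
    dpr p (fun ω => (X ω, Y ω)) (x, y) ≤ dpr p Y y :=
  sum_le_sum fun ω _ => by split_ifs <;> simp_all

theorem dpr_pair_eq_mul_of_kernel_comp [Fintype ρ] [Fintype γ] {R : Ω → ρ} {O : Ω → γ} {B : Ω → β}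
    (f : ρ → β) (K : β → γ → ℝ) (hB : ∀ ω, B ω = f (R ω))
    (hK : ∀ r o, dpr p (fun ω => (R ω, O ω)) (r, o) = dpr p R r * K (f r) o) (b : β) (o : γ) :
    dpr p (fun ω => (B ω, O ω)) (b, o) = dpr p B b * K b o := by
  have hBO : dpr p (fun ω => (B ω, O ω)) (b, o)
      = dpr (dpr p fun ω => (R ω, O ω)) (fun q => (f q.1, q.2)) (b, o) := by
    simp only [hB, dpr_dpr]
  rw [hBO, funext hB, ← dpr_dpr R f, dpr.eq_1 (dpr p R), dpr.eq_1 (dpr p fun ω => (R ω, O ω)),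
    Fintype.sum_prod_type, sum_mul]
  refine sum_congr rfl fun r _ => ?_
  simp only [Prod.ext_iff, ite_and, hK]
  split_ifs with h <;> simp [h]

theorem dpr_coord_eq_mul_of_memoryless {ι 𝒜 𝒪 : Type*} [Fintype ι] [Fintype 𝒜] [Fintype 𝒪]
    (A : Ω → 𝒜) (O : ι → Ω → 𝒪) (K : ι → 𝒜 → 𝒪 → ℝ)
    (hK : ∀ i a, ∑ o, K i a o = 1)
    (hmem : ∀ a os,
      dpr p (fun ω => (A ω, fun i => O i ω)) (a, os) = dpr p A a * ∏ i, K i a (os i))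
    (κ : ι) (r : 𝒜 × ({i // i ≠ κ} → 𝒪)) (o : 𝒪) :
    dpr p (fun ω => ((A ω, fun i : {i // i ≠ κ} => O i ω), O κ ω)) (r, o)
      = dpr p (fun ω => (A ω, fun i : {i // i ≠ κ} => O i ω)) r * K κ r.1 o := by
  obtain ⟨a, os⟩ := r
  have hjoint : ∀ o, dpr p (fun ω => ((A ω, fun i : {i // i ≠ κ} => O i ω), O κ ω)) ((a, os), o)
      = dpr p A a * (K κ a o * ∏ i : {i // i ≠ κ}, K i a (os i)) := by
    intro o
    rw [dpr_congr (Y := fun ω => (A ω, fun i => O i ω))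
      (y := (a, (Equiv.funSplitAt κ 𝒪).symm (o, os))) fun ω => ?_, hmem,
      Fintype.prod_eq_mul_prod_subtype_ne _ κ]
    · simp [Equiv.funSplitAt_symm_apply, fun i : {i // i ≠ κ} => i.2]
    · rw [Prod.mk.injEq, Prod.mk.injEq, Prod.mk.injEq, Equiv.eq_symm_apply]
      simp only [Equiv.funSplitAt_apply, Prod.mk.injEq]
      tauto
  rw [hjoint, ← sum_dpr_pair (fun ω => (A ω, fun i : {i // i ≠ κ} => O i ω)) (O κ)]
  simp only [hjoint, ← mul_sum, ← sum_mul, hK, one_mul]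
  ring

end Distribution

section Entropy

variable {Ω α β γ δ : Type*} [Fintype Ω] [Fintype α] [Fintype β] [Fintype γ] [Fintype δ]
  {p : Ω → ℝ}

theorem dH_eq_sum_negMulLog (X : Ω → α) :
    dH p X = (∑ x, Real.negMulLog (dpr p X x)) / Real.log 2 := by
  simp only [dH, Real.negMulLog, Real.logb, sum_div, ← sum_neg_distrib]
  congr 1; funext x; ring

theorem dH_eq_of_injective {X : Ω → α} {Y : Ω → β} (g : α → β) (hg : Injective g)
    (h : ∀ ω, Y ω = g (X ω)) : dH p Y = dH p X := by
  simp only [dH_eq_sum_negMulLog, funext h]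
  congr 1
  refine (Fintype.sum_of_injective g hg _ _ (fun b hb => ?_) fun a => ?_).symm
  · have : dpr p (fun ω => g (X ω)) b = 0 := sum_eq_zero fun ω _ => if_neg fun h => hb ⟨_, h⟩
    simp [this]
  · rw [dpr_congr fun ω => hg.eq_iff.symm]

theorem dH_dpr (T : Ω → α) (f : α → β) : dH (dpr p T) f = dH p (fun ω => f (T ω)) := by
  simp only [dH, dpr_dpr]

theorem dI_dpr (T : Ω → α) (f : α → β) (g : α → γ) :
    dI (dpr p T) f g = dI p (fun ω => f (T ω)) (fun ω => g (T ω)) := by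
  simp only [dI, dH_dpr]

theorem dI_comm (X : Ω → α) (Y : Ω → β) : dI p X Y = dI p Y X := by
  have := dH_eq_of_injective (p := p) (X := fun ω => (X ω, Y ω)) (Y := fun ω => (Y ω, X ω))
    Prod.swap Prod.swap_injective fun _ => rfl
  simp only [dI, this]
  ring

theorem dCI_eq_of_injective {X : Ω → α} {X' : Ω → β} (g : α → β) (hg : Injective g)
    (h : ∀ ω, X' ω = g (X ω)) (Y : Ω → γ) (Z : Ω → δ) : dCI p X' Y Z = dCI p X Y Z := by
  have hXZ := dH_eq_of_injective (p := p) (X := fun ω => (X ω, Z ω)) (Y := fun ω => (X' ω, Z ω))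
    (Prod.map g id) (hg.prodMap injective_id) fun ω => by simp [h]
  have hXYZ := dH_eq_of_injective (p := p) (X := fun ω => (X ω, Y ω, Z ω))
    (Y := fun ω => (X' ω, Y ω, Z ω)) (Prod.map g id) (hg.prodMap injective_id) fun ω => by simp [h]
  simp only [dCI, hXZ, hXYZ]

theorem dCI_pair_left (A : Ω → α) (B : Ω → β) (W : Ω → γ) (C : Ω → δ) :
    dCI p (fun ω => (A ω, B ω)) W C = dCI p B W C + dCI p A W (fun ω => (B ω, C ω)) := by
  have h1 := dH_eq_of_injective (p := p) (X := fun ω => ((A ω, B ω), C ω))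
    (Y := fun ω => (A ω, B ω, C ω)) (Equiv.prodAssoc α β δ) (Equiv.injective _) fun _ => rfl
  have h2 := dH_eq_of_injective (p := p) (X := fun ω => ((A ω, B ω), W ω, C ω))
    (Y := fun ω => (A ω, W ω, B ω, C ω)) (fun q => (q.1.1, q.2.1, q.1.2, q.2.2))
    (fun _ _ h => by simp_all [Prod.ext_iff]) fun _ => rfl
  have h3 := dH_eq_of_injective (p := p) (X := fun ω => (B ω, W ω, C ω))
    (Y := fun ω => (W ω, B ω, C ω)) (fun q => (q.2.1, q.1, q.2.2))
    (fun _ _ h => by simp_all [Prod.ext_iff]) fun _ => rfl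
  simp only [dCI, ← h1, h2, h3]
  ring

end Entropy

section Conditioning

variable {Ω α β δ : Type*} [Fintype Ω] {p : Ω → ℝ}

/-- The law `p(· | D = d)`; junk (zero) when `P(D = d) = 0`. -/
noncomputable def condPMF (p : Ω → ℝ) (D : Ω → δ) (d : δ) : Ω → ℝ :=
  fun ω => if D ω = d then p ω / dpr p D d else 0

theorem dpr_condPMF (D : Ω → δ) (d : δ) (X : Ω → α) (x : α) :
    dpr (condPMF p D d) X x = dpr p (fun ω => (X ω, D ω)) (x, d) / dpr p D d := by
  simp only [dpr, condPMF, sum_div]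
  refine sum_congr rfl fun ω _ => ?_
  split_ifs <;> simp_all

theorem isPMF_condPMF (hp : ∀ ω, 0 ≤ p ω) {D : Ω → δ} {d : δ} (hd : dpr p D d ≠ 0) :
    IsPMF (condPMF p D d) := by
  refine ⟨fun ω => ?_, ?_⟩
  · unfold condPMF
    split_ifs
    exacts [div_nonneg (hp ω) (dpr_nonneg hp D d), le_rfl]
  · have := sum_dpr (p := condPMF p D d) (fun _ => ())
    rw [← this, Fintype.sum_unique, dpr_condPMF, div_eq_one_iff_eq hd]
    exact dpr_congr fun ω => by simp

theorem dpr_pair_eq_mul [Fintype δ] (hp : ∀ ω, 0 ≤ p ω) (X : Ω → α) (D : Ω → δ) (x : α) (d : δ) :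
    dpr p (fun ω => (X ω, D ω)) (x, d) = dpr (condPMF p D d) X x * dpr p D d := by
  rw [dpr_condPMF]
  by_cases hd : dpr p D d = 0
  · have hxd := (dpr_pair_le hp X D x d).antisymm (hd ▸ dpr_nonneg hp _ _)
    simp [hd, hxd]
  · field_simp

theorem dH_pair_eq_add_sum [Fintype α] [Fintype δ] (hp : ∀ ω, 0 ≤ p ω) (X : Ω → α) (D : Ω → δ) :
    dH p (fun ω => (X ω, D ω)) = dH p D + ∑ d, dpr p D d * dH (condPMF p D d) X := by
  have hsplit : ∀ d, ∑ x, Real.negMulLog (dpr p (fun ω => (X ω, D ω)) (x, d))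
      = Real.negMulLog (dpr p D d) + dpr p D d * ∑ x, Real.negMulLog (dpr (condPMF p D d) X x) := by
    intro d
    simp only [dpr_pair_eq_mul hp, Real.negMulLog_mul, sum_add_distrib, ← sum_mul, ← mul_sum]
    by_cases hd : dpr p D d = 0
    · simp [hd]
    · rw [sum_dpr, (isPMF_condPMF hp hd).2, one_mul, add_comm]
  simp only [dH_eq_sum_negMulLog, Fintype.sum_prod_type_right, hsplit, sum_add_distrib, add_div,
    sum_div, mul_div_assoc]

theorem dCI_eq_sum_dI [Fintype α] [Fintype β] [Fintype δ] (hp : ∀ ω, 0 ≤ p ω)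
    (X : Ω → α) (Y : Ω → β) (D : Ω → δ) :
    dCI p X Y D = ∑ d, dpr p D d * dI (condPMF p D d) X Y := by
  have hXYD := dH_eq_of_injective (p := p) (X := fun ω => ((X ω, Y ω), D ω))
    (Y := fun ω => (X ω, Y ω, D ω)) (Equiv.prodAssoc α β δ) (Equiv.injective _) fun _ => rfl
  simp only [dCI, hXYD, dH_pair_eq_add_sum hp, dI, mul_sub, mul_add, sum_add_distrib,
    sum_sub_distrib]
  ring

end Conditioning

section Hybrid

variable {Ω α β γ δ : Type*} {I : ℕ} (U : Fin I → Ω → α) (V : Fin I → Ω → β)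

def hybrid (t : ℕ) (ω : Ω) : Fin I → α ⊕ β :=
  fun j => if j.val < t then .inl (U j ω) else .inr (V j ω)

def hybridExcept (k : Fin I) (ω : Ω) : {j // j ≠ k} → α ⊕ β :=
  fun j => hybrid U V k ω j

theorem hybrid_succ_eq (k : Fin I) (ω : Ω) :
    hybrid U V (k + 1) ω
      = (Equiv.funSplitAt k _).symm (.inl (U k ω), hybridExcept U V k ω) := by
  funext j
  rw [Equiv.funSplitAt_symm_apply]
  split_ifs with h
  · simp [hybrid, h]
  · have : j.val ≠ k.val := fun h' => h (Fin.ext h')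
    simp only [hybridExcept, hybrid]
    exact if_congr (by omega) rfl rfl

theorem hybrid_eq (k : Fin I) (ω : Ω) :
    hybrid U V k ω = (Equiv.funSplitAt k _).symm (.inr (V k ω), hybridExcept U V k ω) := by
  funext j
  rw [Equiv.funSplitAt_symm_apply]
  split_ifs with h
  · simp [hybrid, h]
  · rfl

variable [Fintype Ω] [Fintype α] [Fintype β] [Fintype γ] [Fintype δ] {p : Ω → ℝ}

theorem dCI_hybrid_succ_sub (k : Fin I) (W : Ω → γ) (C : Ω → δ) :
    dCI p (hybrid U V (k + 1)) W C - dCI p (hybrid U V k) W C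
      = dCI p (U k) W (fun ω => (hybridExcept U V k ω, C ω))
        - dCI p (V k) W (fun ω => (hybridExcept U V k ω, C ω)) := by
  let e := (Equiv.funSplitAt k (α ⊕ β)).symm
  rw [dCI_eq_of_injective (X := fun ω => (U k ω, hybridExcept U V k ω)) (fun q => e (.inl q.1, q.2))
      (e.injective.comp (Sum.inl_injective.prodMap injective_id)) (hybrid_succ_eq U V k),
    dCI_eq_of_injective (X := fun ω => (V k ω, hybridExcept U V k ω)) (fun q => e (.inr q.1, q.2))
      (e.injective.comp (Sum.inr_injective.prodMap injective_id)) (hybrid_eq U V k),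
    dCI_pair_left, dCI_pair_left]
  ring

theorem dCI_le_dCI_of_hybrid (W : Ω → γ) (C : Ω → δ)
    (h : ∀ k, dCI p (V k) W (fun ω => (hybridExcept U V k ω, C ω))
      ≤ dCI p (U k) W (fun ω => (hybridExcept U V k ω, C ω))) :
    dCI p (fun ω j => V j ω) W C ≤ dCI p (fun ω j => U j ω) W C := by
  have mono : ∀ t ≤ I, dCI p (hybrid U V 0) W C ≤ dCI p (hybrid U V t) W C := by
    intro t ht
    induction t with
    | zero => exact le_rfl
    | succ t ih =>
      have := dCI_hybrid_succ_sub U V (p := p) ⟨t, ht⟩ W C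
      linarith [ih (by omega), h ⟨t, ht⟩]
  have hV := dCI_eq_of_injective (p := p) (X := fun ω j => V j ω) (X' := hybrid U V 0)
    (fun v j => .inr (v j)) (fun v v' h => funext fun j => Sum.inr_injective (congrFun h j))
    (fun ω => funext fun j => if_neg j.val.not_lt_zero) W C
  have hU := dCI_eq_of_injective (p := p) (X := fun ω j => U j ω) (X' := hybrid U V I)
    (fun u j => .inl (u j)) (fun u u' h => funext fun j => Sum.inl_injective (congrFun h j))
    (fun ω => funext fun j => if_pos j.isLt) W C
  exact hV ▸ hU ▸ mono I le_rfl

end Hybrid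

section Channel

variable {Ω 𝒳 𝒮 𝒴 𝒵 : Type*} [Fintype Ω] [Fintype 𝒳] [Fintype 𝒴] [Fintype 𝒵] {p : Ω → ℝ}

/-- `I(U;Y | S = s) ≥ I(U;Z | S = s)`, where `w` is the joint law of `(U, X)` and the outputs
`(Y, Z)` are drawn from `Q(· | X, s)`. -/
def LessNoisy (Q : 𝒳 → 𝒮 → 𝒴 × 𝒵 → ℝ) : Prop :=
  ∀ (𝒰 : Type) (_ : Fintype 𝒰) (w : 𝒰 × 𝒳 → ℝ),
    ((∀ ux, 0 ≤ w ux) ∧ ∑ ux, w ux = 1) → ∀ s : 𝒮,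
      dI (Ω := 𝒰 × 𝒳 × (𝒴 × 𝒵)) (fun q => w (q.1, q.2.1) * Q q.2.1 s q.2.2)
          (fun q => q.1) (fun q => q.2.2.1)
      ≥ dI (Ω := 𝒰 × 𝒳 × (𝒴 × 𝒵)) (fun q => w (q.1, q.2.1) * Q q.2.1 s q.2.2)
          (fun q => q.1) (fun q => q.2.2.2)

theorem dCI_le_dCI_of_lessNoisy {𝒲 : Type} {𝒟 : Type*} [Fintype 𝒲] [Fintype 𝒟]
    {Q : 𝒳 → 𝒮 → 𝒴 × 𝒵 → ℝ} (hQ : LessNoisy Q) (hp : ∀ ω, 0 ≤ p ω)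
    (W : Ω → 𝒲) (X : Ω → 𝒳) (D : Ω → 𝒟) (Y : Ω → 𝒴) (Z : Ω → 𝒵) (σ : 𝒟 → 𝒮)
    (hch : ∀ u x d yz, dpr p (fun ω => (((W ω, X ω), D ω), (Y ω, Z ω))) (((u, x), d), yz)
      = dpr p (fun ω => ((W ω, X ω), D ω)) ((u, x), d) * Q x (σ d) yz) :
    dCI p Z W D ≤ dCI p Y W D := by
  rw [dCI_eq_sum_dI hp, dCI_eq_sum_dI hp]
  refine sum_le_sum fun d _ => ?_
  by_cases hd : dpr p D d = 0
  · simp [hd]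
  refine mul_le_mul_of_nonneg_left ?_ (dpr_nonneg hp D d)
  have hlaw : (fun q : 𝒲 × 𝒳 × (𝒴 × 𝒵) =>
        dpr (condPMF p D d) (fun ω => (W ω, X ω)) (q.1, q.2.1) * Q q.2.1 (σ d) q.2.2)
      = dpr (condPMF p D d) (fun ω => (W ω, X ω, (Y ω, Z ω))) := by
    funext ⟨u, x, yz⟩
    rw [dpr_condPMF, dpr_condPMF, div_mul_eq_mul_div, ← hch]
    congr 1
    exact dpr_congr fun ω => by simp only [Prod.ext_iff]; tauto
  have := hQ 𝒲 inferInstance _ (isPMF_dpr (isPMF_condPMF hp hd) fun ω => (W ω, X ω)) (σ d)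
  rw [hlaw, dI_dpr, dI_dpr] at this
  rwa [dI_comm Z, dI_comm Y]

end Channel

theorem dCI_past_le {Ω ℳ 𝒳 𝒮 𝒴 𝒵 : Type*} {𝒲 : Type} [Fintype Ω] [Fintype ℳ] [Fintype 𝒳]
    [Fintype 𝒮] [Fintype 𝒴] [Fintype 𝒵] [Fintype 𝒲] {p : Ω → ℝ} {n : ℕ}
    {Q : 𝒳 → 𝒮 → 𝒴 × 𝒵 → ℝ} (hQ : LessNoisy Q) (hQ1 : ∀ x s, ∑ yz, Q x s yz = 1)
    (hp : ∀ ω, 0 ≤ p ω) (M : Ω → ℳ) (Xs : Fin n → Ω → 𝒳) (Ss : Fin n → Ω → 𝒮)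
    (Ys : Fin n → Ω → 𝒴) (Zs : Fin n → Ω → 𝒵)
    (hmem : ∀ a os, dpr p (fun ω => ((M ω, (fun i => Xs i ω), fun i => Ss i ω),
        fun i => (Ys i ω, Zs i ω))) (a, os)
      = dpr p (fun ω => (M ω, (fun i => Xs i ω), fun i => Ss i ω)) a
        * ∏ i, Q (a.2.1 i) (a.2.2 i) (os i))
    (i : Fin n) (g : 𝒴 × 𝒵 → 𝒲) :
    dCI p (fun ω (j : Fin i) => Zs (Fin.castLE i.isLt.le j) ω) (fun ω => g (Ys i ω, Zs i ω))
        (fun ω => (M ω, fun j => Ss j ω))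
      ≤ dCI p (fun ω (j : Fin i) => Ys (Fin.castLE i.isLt.le j) ω) (fun ω => g (Ys i ω, Zs i ω))
        (fun ω => (M ω, fun j => Ss j ω)) := by
  refine dCI_le_dCI_of_hybrid _ _ _ _ fun k => ?_
  set κ := Fin.castLE i.isLt.le k
  have hκ : ∀ j : {j // j ≠ k}, Fin.castLE i.isLt.le j ≠ κ :=
    fun j => (Fin.castLE_injective _).ne j.2
  have hi : i ≠ κ := (show κ < i from k.isLt).ne'
  let σ : ({j // j ≠ k} → 𝒴 ⊕ 𝒵) × ℳ × (Fin n → 𝒮) → 𝒮 := fun d => d.2.2 κ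
  refine dCI_le_dCI_of_lessNoisy hQ hp _ (Xs κ) _ (Ys κ) (Zs κ) σ fun u x d yz => ?_
  -- `((W, X_κ), D)` as a function of `M, Xⁿ, Sⁿ` and the output letters other than `κ`
  exact dpr_pair_eq_mul_of_kernel_comp
    (R := fun ω => ((M ω, (fun i => Xs i ω), fun i => Ss i ω),
      fun j : {j // j ≠ κ} => (Ys j ω, Zs j ω)))
    (fun r => ((g (r.2 ⟨i, hi⟩), r.1.2.1 κ),
      (fun j : {j // j ≠ k} => if j.1.val < k then .inl (r.2 ⟨_, hκ j⟩).1
        else .inr (r.2 ⟨_, hκ j⟩).2, r.1.1, r.1.2.2)))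
    (fun b o => Q b.1.2 (σ b.2) o) (fun ω => rfl)
    (dpr_coord_eq_mul_of_memoryless _ (fun j ω => (Ys j ω, Zs j ω))
      (fun j (a : ℳ × (Fin n → 𝒳) × (Fin n → 𝒮)) => Q (a.2.1 j) (a.2.2 j))
      (fun _ _ => hQ1 _ _) hmem κ) _ _

theorem less_noisy_lemma_with_SI_general {Ω ℳ 𝒳 𝒮 𝒴 𝒵 : Type}
    [Fintype Ω] [Fintype ℳ] [Fintype 𝒳] [Fintype 𝒮] [Fintype 𝒴] [Fintype 𝒵]
    (n : ℕ) (p : Ω → ℝ) (hp : IsPMF p)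
    -- the single-letter channel p(y,z | x, s) and the side-information marginal p_S
    (Q : 𝒳 → 𝒮 → 𝒴 × 𝒵 → ℝ) (hQ : ∀ x s, (∀ yz, 0 ≤ Q x s yz) ∧ ∑ yz, Q x s yz = 1)
    -- the n-letter random variables
    (M : Ω → ℳ) (Xs : Fin n → Ω → 𝒳) (Ss : Fin n → Ω → 𝒮)
    (Ys : Fin n → Ω → 𝒴) (Zs : Fin n → Ω → 𝒵)
    -- `Y` is less noisy than `Z` given the side information:
    -- I(U;Y|S=s) ≥ I(U;Z|S=s) for every s and every p(u)p(x|u) (i.e. every joint pmf w on U×X)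
    (hLN : ∀ (𝒰 : Type) (_ : Fintype 𝒰) (w : 𝒰 × 𝒳 → ℝ),
      ((∀ ux, 0 ≤ w ux) ∧ ∑ ux, w ux = 1) → ∀ s : 𝒮,
        dI (Ω := 𝒰 × 𝒳 × (𝒴 × 𝒵)) (fun q => w (q.1, q.2.1) * Q q.2.1 s q.2.2)
            (fun q => q.1) (fun q => q.2.2.1)
        ≥ dI (Ω := 𝒰 × 𝒳 × (𝒴 × 𝒵)) (fun q => w (q.1, q.2.1) * Q q.2.1 s q.2.2)
            (fun q => q.1) (fun q => q.2.2.2))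
    -- the channel is memoryless: p(m,xⁿ,sⁿ,yⁿ,zⁿ) = p(m,xⁿ,sⁿ) ∏ᵢ Q(yᵢ,zᵢ | xᵢ,sᵢ)
    (hMem : ∀ (m : ℳ) (xs : Fin n → 𝒳) (ss : Fin n → 𝒮) (ys : Fin n → 𝒴) (zs : Fin n → 𝒵),
      dpr p (fun ω => (M ω, (fun i => Xs i ω), (fun i => Ss i ω),
                        (fun i => Ys i ω), (fun i => Zs i ω))) (m, xs, ss, ys, zs)
        = dpr p (fun ω => (M ω, (fun i => Xs i ω), (fun i => Ss i ω))) (m, xs, ss)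
            * ∏ i, Q (xs i) (ss i) (ys i, zs i)) :
    ∀ i : Fin n,
      dCI p (fun ω => fun j : Fin i.val => Ys ⟨j.val, j.isLt.trans i.isLt⟩ ω) (Ys i)
          (fun ω => (M ω, fun j => Ss j ω))
        ≥ dCI p (fun ω => fun j : Fin i.val => Zs ⟨j.val, j.isLt.trans i.isLt⟩ ω) (Ys i)
          (fun ω => (M ω, fun j => Ss j ω))
      ∧
      dCI p (fun ω => fun j : Fin i.val => Ys ⟨j.val, j.isLt.trans i.isLt⟩ ω) (Zs i)
          (fun ω => (M ω, fun j => Ss j ω))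
        ≥ dCI p (fun ω => fun j : Fin i.val => Zs ⟨j.val, j.isLt.trans i.isLt⟩ ω) (Zs i)
          (fun ω => (M ω, fun j => Ss j ω)) := by
  have hmem : ∀ a os, dpr p (fun ω => ((M ω, (fun i => Xs i ω), fun i => Ss i ω),
        fun i => (Ys i ω, Zs i ω))) (a, os)
      = dpr p (fun ω => (M ω, (fun i => Xs i ω), fun i => Ss i ω)) a
        * ∏ i, Q (a.2.1 i) (a.2.2 i) (os i) := by
    rintro ⟨m, xs, ss⟩ os
    rw [← hMem m xs ss (fun i => (os i).1) (fun i => (os i).2)]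
    exact dpr_congr fun ω => by simp [funext_iff, Prod.ext_iff, forall_and, and_assoc]
  intro i
  exact ⟨dCI_past_le hLN (fun x s => (hQ x s).2) hp.1 M Xs Ss Ys Zs hmem i Prod.fst,
    dCI_past_le hLN (fun x s => (hQ x s).2) hp.1 M Xs Ss Ys Zs hmem i Prod.snd⟩

/-- Less noisy lemma with side information. -/
theorem less_noisy_lemma_with_SI {Ω ℳ 𝒳 𝒮 𝒴 𝒵 : Type}
    [Fintype Ω] [Fintype ℳ] [Fintype 𝒳] [Fintype 𝒮] [Fintype 𝒴] [Fintype 𝒵]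
    (n : ℕ) (p : Ω → ℝ) (hp : IsPMF p)
    -- the single-letter channel p(y,z | x, s) and the side-information marginal p_S
    (Q : 𝒳 → 𝒮 → 𝒴 × 𝒵 → ℝ) (hQ : ∀ x s, (∀ yz, 0 ≤ Q x s yz) ∧ ∑ yz, Q x s yz = 1)
    (pS : 𝒮 → ℝ) (hpS : (∀ s, 0 ≤ pS s) ∧ ∑ s, pS s = 1)
    -- the n-letter random variables
    (M : Ω → ℳ) (Xs : Fin n → Ω → 𝒳) (Ss : Fin n → Ω → 𝒮)
    (Ys : Fin n → Ω → 𝒴) (Zs : Fin n → Ω → 𝒵)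
    -- `Y` is less noisy than `Z` given the side information:
    -- I(U;Y|S=s) ≥ I(U;Z|S=s) for every s and every p(u)p(x|u) (i.e. every joint pmf w on U×X)
    (hLN : ∀ (𝒰 : Type) (_ : Fintype 𝒰) (w : 𝒰 × 𝒳 → ℝ),
      ((∀ ux, 0 ≤ w ux) ∧ ∑ ux, w ux = 1) → ∀ s : 𝒮,
        dI (Ω := 𝒰 × 𝒳 × (𝒴 × 𝒵)) (fun q => w (q.1, q.2.1) * Q q.2.1 s q.2.2)
            (fun q => q.1) (fun q => q.2.2.1)
        ≥ dI (Ω := 𝒰 × 𝒳 × (𝒴 × 𝒵)) (fun q => w (q.1, q.2.1) * Q q.2.1 s q.2.2)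
            (fun q => q.1) (fun q => q.2.2.2))
    -- the channel is memoryless: p(m,xⁿ,sⁿ,yⁿ,zⁿ) = p(m,xⁿ,sⁿ) ∏ᵢ Q(yᵢ,zᵢ | xᵢ,sᵢ)
    (hMem : ∀ (m : ℳ) (xs : Fin n → 𝒳) (ss : Fin n → 𝒮) (ys : Fin n → 𝒴) (zs : Fin n → 𝒵),
      dpr p (fun ω => (M ω, (fun i => Xs i ω), (fun i => Ss i ω),
                        (fun i => Ys i ω), (fun i => Zs i ω))) (m, xs, ss, ys, zs)
        = dpr p (fun ω => (M ω, (fun i => Xs i ω), (fun i => Ss i ω))) (m, xs, ss)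
            * ∏ i, Q (xs i) (ss i) (ys i, zs i))
    -- Sⁿ is i.i.d. with marginal pS
    (hiid : ∀ ss : Fin n → 𝒮,
      dpr p (fun ω => fun i => Ss i ω) ss = ∏ i, pS (ss i)) :
    ∀ i : Fin n,
      dCI p (fun ω => fun j : Fin i.val => Ys ⟨j.val, j.isLt.trans i.isLt⟩ ω) (Ys i)
          (fun ω => (M ω, fun j => Ss j ω))
        ≥ dCI p (fun ω => fun j : Fin i.val => Zs ⟨j.val, j.isLt.trans i.isLt⟩ ω) (Ys i)
          (fun ω => (M ω, fun j => Ss j ω))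
      ∧
      dCI p (fun ω => fun j : Fin i.val => Ys ⟨j.val, j.isLt.trans i.isLt⟩ ω) (Zs i)
          (fun ω => (M ω, fun j => Ss j ω))
        ≥ dCI p (fun ω => fun j : Fin i.val => Zs ⟨j.val, j.isLt.trans i.isLt⟩ ω) (Zs i)
          (fun ω => (M ω, fun j => Ss j ω)) :=
  less_noisy_lemma_with_SI_general n p hp Q hQ M Xs Ss Ys Zs hLN hMem
end

section
/- In the converse for the 3-receiver less noisy broadcast channel, for any random variables with M₂, M₃ independent messages, Sⁿ i.i.d. side information independent of (M₂,M₃), and Y₂ⁿ the output: (1/n)H(M₂ | M₃, Sⁿ) ≤ ε + (1/n)∑_{i=1}^n I(V_i; Y_{2,i} | U_i, S_i) + (1/n)H(M₂ | M₃, Sⁿ, Y₂ⁿ), where U_i = (M₃, S^{i-1}, S_{i+1}^n, Y₂^{i-1}) and V_i = (M₂, M₃, Y₂^{i-1}) with ε = 0. -/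
open scoped Classical
open Finset

/-! Conditional entropies and informations depend on random variables only through the
partitions of `Ω` they induce (their kernels `Setoid.ker`), not through how values are
encoded. The identity is then the chain rule
`I(M₂; Yⁿ | M₃, Sⁿ) = ∑ᵢ I(M₂; Yᵢ | M₃, Sⁿ, Y^{i-1})`, obtained by telescoping
`H(M₂ | M₃, Sⁿ, Y^{i-1}) - H(M₂ | M₃, Sⁿ, Y^i)`: `(Uᵢ, Sᵢ)` induces the same partition as
`(M₃, Sⁿ, Y^{i-1})`, and `(Vᵢ, Uᵢ, Sᵢ)` the same as `(M₂, M₃, Sⁿ, Y^{i-1})`. -/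

theorem Setoid.ker_prodMk {α β γ : Type*} (f : α → β) (g : α → γ) :
    Setoid.ker (fun a => (f a, g a)) = Setoid.ker f ⊓ Setoid.ker g := by
  ext a a'
  simp only [Setoid.inf_iff_and, Setoid.ker_def, Prod.mk.injEq]

section Entropy

variable {Ω 𝒳 𝒴 𝒵 𝒳' 𝒵' : Type*} [Fintype Ω] [Fintype 𝒳] [Fintype 𝒴] [Fintype 𝒵]
  [Fintype 𝒳'] [Fintype 𝒵'] (p : Ω → ℝ)

theorem dH_eq_neg_sum_logb_dpr (X : Ω → 𝒳) :
    dH p X = -∑ ω, p ω * Real.logb 2 (dpr p X (X ω)) := by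
  simp only [dH, dpr, Finset.sum_mul, ite_mul, zero_mul]
  rw [Finset.sum_comm]
  simp

theorem dH_congr_of_ker_eq {X : Ω → 𝒳} {Y : Ω → 𝒴} (h : Setoid.ker X = Setoid.ker Y) :
    dH p X = dH p Y := by
  have hXY (ω ω' : Ω) : X ω' = X ω ↔ Y ω' = Y ω := by
    rw [← Setoid.ker_def, h, Setoid.ker_def]
  simp only [dH_eq_neg_sum_logb_dpr, dpr, hXY]

theorem dCH_congr {X : Ω → 𝒳} {Z : Ω → 𝒵} {X' : Ω → 𝒳'} {Z' : Ω → 𝒵'}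
    (hXZ : Setoid.ker (fun ω => (X ω, Z ω)) = Setoid.ker (fun ω => (X' ω, Z' ω)))
    (hZ : Setoid.ker Z = Setoid.ker Z') :
    dCH p X Z = dCH p X' Z' := by
  rw [dCH, dCH, dH_congr_of_ker_eq p hXZ, dH_congr_of_ker_eq p hZ]

theorem dCI_eq_dCH_sub_dCH (X : Ω → 𝒳) (Y : Ω → 𝒴) (Z : Ω → 𝒵) :
    dCI p X Y Z = dCH p X Z - dCH p X (fun ω => (Y ω, Z ω)) := by
  rw [dCI, dCH, dCH]
  ring

theorem dCI_congr {X : Ω → 𝒳} {Z : Ω → 𝒵} {X' : Ω → 𝒳'} {Z' : Ω → 𝒵'} (Y : Ω → 𝒴)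
    (hXZ : Setoid.ker (fun ω => (X ω, Z ω)) = Setoid.ker (fun ω => (X' ω, Z' ω)))
    (hZ : Setoid.ker Z = Setoid.ker Z') :
    dCI p X Y Z = dCI p X' Y Z' := by
  rw [dCI_eq_dCH_sub_dCH, dCI_eq_dCH_sub_dCH, dCH_congr p hXZ hZ]
  simp only [Setoid.ker_prodMk] at hXZ
  congr 1
  apply dCH_congr
  · simp only [Setoid.ker_prodMk]
    rw [inf_left_comm, hXZ, inf_left_comm]
  · simp only [Setoid.ker_prodMk, hZ]

end Entropy

section Prefix

variable {Ω 𝒴 : Type*} {n : ℕ} (Y : Fin n → Ω → 𝒴)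

theorem ker_prefix_zero :
    Setoid.ker (fun ω (j : {j : Fin n // (j : ℕ) < 0}) => Y j ω) = ⊤ := by
  ext ω ω'
  simp [Setoid.ker_def, funext_iff]

theorem ker_prefix_self :
    Setoid.ker (fun ω (j : {j : Fin n // (j : ℕ) < n}) => Y j ω)
      = Setoid.ker (fun ω j => Y j ω) := by
  ext ω ω'
  simp [Setoid.ker_def, funext_iff]

theorem ker_prefix_succ (i : Fin n) :
    Setoid.ker (fun ω (j : {j : Fin n // (j : ℕ) < i + 1}) => Y j ω)
      = Setoid.ker (Y i) ⊓ Setoid.ker (fun ω (j : {j : Fin n // (j : ℕ) < i}) => Y j ω) := by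
  ext ω ω'
  simp only [Setoid.inf_iff_and, Setoid.ker_def, funext_iff, Subtype.forall,
    Nat.lt_succ_iff_lt_or_eq, or_imp, forall_and, Fin.val_inj, forall_eq]
  exact and_comm

theorem ker_fin_prefix_eq_ker_prefix (i : Fin n) :
    Setoid.ker (fun ω (j : Fin i) => Y ⟨j, j.isLt.trans i.isLt⟩ ω)
      = Setoid.ker (fun ω (j : {j : Fin n // (j : ℕ) < i}) => Y j ω) := by
  ext ω ω'
  simp only [Setoid.ker_def, funext_iff, Subtype.forall, Fin.forall_iff]
  exact ⟨fun h k _ hki => h k hki, fun h k hki => h k (hki.trans i.isLt) hki⟩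

theorem ker_pi_split_at (i : Fin n) :
    Setoid.ker (fun ω j => Y j ω)
      = Setoid.ker (fun ω (j : Fin i) => Y ⟨j, j.isLt.trans i.isLt⟩ ω)
        ⊓ Setoid.ker (fun ω (j : {j : Fin n // i < j}) => Y j ω) ⊓ Setoid.ker (Y i) := by
  ext ω ω'
  simp only [Setoid.inf_iff_and, Setoid.ker_def, funext_iff, Subtype.forall]
  constructor
  · intro h
    exact ⟨⟨fun j => h _, fun j _ => h j⟩, h i⟩
  · rintro ⟨⟨h_lt, h_gt⟩, h_eq⟩ j
    rcases lt_trichotomy j i with hji | rfl | hij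
    · exact h_lt ⟨j, hji⟩
    · exact h_eq
    · exact h_gt j hij

end Prefix

theorem dCH_sub_dCH_eq_sum_dCI {Ω 𝒳 𝒴 𝒵 : Type*} [Fintype Ω] [Fintype 𝒳] [Fintype 𝒴]
    [Fintype 𝒵] (p : Ω → ℝ) (X : Ω → 𝒳) (Z : Ω → 𝒵) {n : ℕ} (Y : Fin n → Ω → 𝒴) :
    dCH p X Z - dCH p X (fun ω => (Z ω, fun i => Y i ω))
      = ∑ i : Fin n,
          dCI p X (Y i) (fun ω => (Z ω, fun j : {j : Fin n // (j : ℕ) < i} => Y j ω)) := by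
  set c : ℕ → ℝ :=
    fun k => dCH p X (fun ω => (Z ω, fun j : {j : Fin n // (j : ℕ) < k} => Y j ω))
  have h_zero : dCH p X Z = c 0 :=
    dCH_congr p (by simp only [Setoid.ker_prodMk, ker_prefix_zero, inf_top_eq])
      (by simp only [Setoid.ker_prodMk, ker_prefix_zero, inf_top_eq])
  have h_last : dCH p X (fun ω => (Z ω, fun i => Y i ω)) = c n :=
    dCH_congr p (by simp only [Setoid.ker_prodMk, ker_prefix_self])
      (by simp only [Setoid.ker_prodMk, ker_prefix_self])
  have h_step (i : Fin n) :
      dCI p X (Y i) (fun ω => (Z ω, fun j : {j : Fin n // (j : ℕ) < i} => Y j ω))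
        = c i - c (i + 1) := by
    rw [dCI_eq_dCH_sub_dCH]
    congr 1
    apply dCH_congr <;> simp only [Setoid.ker_prodMk, ker_prefix_succ, inf_left_comm]
  rw [h_zero, h_last, Finset.sum_congr rfl fun i _ => h_step i,
    Fin.sum_univ_eq_sum_range (fun k => c k - c (k + 1)), Finset.sum_range_sub']

theorem single_letterization_R2_general {Ω ℳ₂ ℳ₃ 𝒮 𝒴 : Type*}
    [Fintype Ω] [Fintype ℳ₂] [Fintype ℳ₃] [Fintype 𝒮] [Fintype 𝒴]
    (n : ℕ) (p : Ω → ℝ)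
    (M₂ : Ω → ℳ₂) (M₃ : Ω → ℳ₃) (S : Fin n → Ω → 𝒮) (Y : Fin n → Ω → 𝒴) :
    dCH p M₂ (fun ω => (M₃ ω, fun i => S i ω))
      - dCH p M₂ (fun ω => (M₃ ω, (fun i => S i ω), (fun i => Y i ω)))
    = ∑ i : Fin n,
        dCI p
          (fun ω => (M₂ ω, M₃ ω, fun j : Fin i.val => Y ⟨j.val, j.isLt.trans i.isLt⟩ ω))
          (Y i)
          (fun ω => ((M₃ ω,
              (fun j : Fin i.val => S ⟨j.val, j.isLt.trans i.isLt⟩ ω),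
              (fun j : {j : Fin n // i < j} => S j.val ω),
              (fun j : Fin i.val => Y ⟨j.val, j.isLt.trans i.isLt⟩ ω)),
            S i ω)) := by
  have h_regroup : dCH p M₂ (fun ω => (M₃ ω, (fun i => S i ω), (fun i => Y i ω)))
      = dCH p M₂ (fun ω => ((M₃ ω, fun i => S i ω), fun i => Y i ω)) :=
    dCH_congr p (by simp only [Setoid.ker_prodMk, inf_assoc])
      (by simp only [Setoid.ker_prodMk, inf_assoc])
  rw [h_regroup, dCH_sub_dCH_eq_sum_dCI]
  refine Finset.sum_congr rfl fun i _ => dCI_congr p (Y i) ?_ ?_ <;>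
    simp only [Setoid.ker_prodMk, ker_fin_prefix_eq_ker_prefix, ker_pi_split_at S i,
      inf_assoc, inf_comm, inf_left_comm, inf_idem, inf_left_idem]

/-- single-letterization identity in the converse for the 3-receiver
less noisy BC: H(M₂|M₃,Sⁿ) − H(M₂|M₃,Sⁿ,Y₂ⁿ) = ∑ᵢ I(Vᵢ; Y₂ᵢ | Uᵢ, Sᵢ) with
Uᵢ = (M₃, S^{i-1}, S_{i+1}^n, Y₂^{i-1}) and Vᵢ = (M₂, M₃, Y₂^{i-1}). -/
theorem single_letterization_R2 {Ω ℳ₂ ℳ₃ 𝒮 𝒴 : Type*}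
    [Fintype Ω] [Fintype ℳ₂] [Fintype ℳ₃] [Fintype 𝒮] [Fintype 𝒴]
    (n : ℕ) (p : Ω → ℝ) (hp : IsPMF p)
    (M₂ : Ω → ℳ₂) (M₃ : Ω → ℳ₃) (S : Fin n → Ω → 𝒮) (Y : Fin n → Ω → 𝒴)
    (pS : 𝒮 → ℝ)
    -- the messages are independent
    (hMind : dIndep p M₂ M₃)
    -- Sⁿ is i.i.d. with marginal pS and independent of the messages
    (hiid : ∀ ss : Fin n → 𝒮, dpr p (fun ω => fun i => S i ω) ss = ∏ i, pS (ss i))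
    (hSind : dIndep p (fun ω => (M₂ ω, M₃ ω)) (fun ω => fun i => S i ω)) :
    dCH p M₂ (fun ω => (M₃ ω, fun i => S i ω))
      - dCH p M₂ (fun ω => (M₃ ω, (fun i => S i ω), (fun i => Y i ω)))
    = ∑ i : Fin n,
        dCI p
          (fun ω => (M₂ ω, M₃ ω, fun j : Fin i.val => Y ⟨j.val, j.isLt.trans i.isLt⟩ ω))
          (Y i)
          (fun ω => ((M₃ ω,
              (fun j : Fin i.val => S ⟨j.val, j.isLt.trans i.isLt⟩ ω),
              (fun j : {j : Fin n // i < j} => S j.val ω),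
              (fun j : Fin i.val => Y ⟨j.val, j.isLt.trans i.isLt⟩ ω)),
            S i ω)) :=
  single_letterization_R2_general n p M₂ M₃ S Y
end
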